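/- Consider the system Σ = (A,B,C,D; C, C², C) with A = 0 : C → C, B = [1, 0] : C² → C, C = 1 : C → C, D = [0, 0] : C² → C. Then the system matrix M(Σ) = [[0,1,0],[1,0,0]] is a co-isometry (M(Σ)M(Σ)* = I), Σ is minimal, its transfer function is θ(λ) = [λ, 0], and the operator δ_Σ(1) = I_{C²} − D*D − B*B equals diag(0,1), which is nonzero. -/

import Mathlib

/-! Everything is a direct computation once block operators are handled abstractly: the adjoint
of `[[a, b], [c, d]]` is `[[a*, c*], [b*, d*]]`, so `M(Σ) M(Σ)* = [[B B*, 0], [0, 1]]`, and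
`B B* = 1` because the adjoint of the coordinate projection `B` is the coordinate embedding.
Minimality already holds at `n = 0`, since `B` is onto and `C` is injective. Because `A = 0`
the resolvent is `1`, and `B* B` is the projection onto the first coordinate. -/

open scoped InnerProductSpace

/-- The 2×2 block operator `[[a, b],[c, d]] : X ⊕ U → X ⊕ Y` between Hilbert space
orthogonal direct sums. -/
noncomputable def blk {X U Y : Type*}
    [NormedAddCommGroup X] [InnerProductSpace ℂ X] [CompleteSpace X]
    [NormedAddCommGroup U] [InnerProductSpace ℂ U] [CompleteSpace U]
    [NormedAddCommGroup Y] [InnerProductSpace ℂ Y] [CompleteSpace Y]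
    (a : X →L[ℂ] X) (b : U →L[ℂ] X) (c : X →L[ℂ] Y) (d : U →L[ℂ] Y) :
    WithLp 2 (X × U) →L[ℂ] WithLp 2 (X × Y) :=
  ((WithLp.prodContinuousLinearEquiv 2 ℂ X Y).symm : (X × Y) →L[ℂ] WithLp 2 (X × Y)).comp
    ((((a.comp (ContinuousLinearMap.fst ℂ X U)) + (b.comp (ContinuousLinearMap.snd ℂ X U))).prod
      ((c.comp (ContinuousLinearMap.fst ℂ X U)) + (d.comp (ContinuousLinearMap.snd ℂ X U)))).comp
      ((WithLp.prodContinuousLinearEquiv 2 ℂ X U) : WithLp 2 (X × U) →L[ℂ] (X × U)))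

open ContinuousLinearMap

section BlockOperator

variable {X U Y V : Type*}
  [NormedAddCommGroup X] [InnerProductSpace ℂ X] [CompleteSpace X]
  [NormedAddCommGroup U] [InnerProductSpace ℂ U] [CompleteSpace U]
  [NormedAddCommGroup Y] [InnerProductSpace ℂ Y] [CompleteSpace Y]
  [NormedAddCommGroup V] [InnerProductSpace ℂ V] [CompleteSpace V]

@[simp]
lemma blk_apply (a : X →L[ℂ] X) (b : U →L[ℂ] X) (c : X →L[ℂ] Y) (d : U →L[ℂ] Y)
    (x : WithLp 2 (X × U)) :
    blk a b c d x = WithLp.toLp 2 (a x.fst + b x.snd, c x.fst + d x.snd) := rfl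

lemma adjoint_blk (a : X →L[ℂ] X) (b : U →L[ℂ] X) (c : X →L[ℂ] Y) (d : U →L[ℂ] Y) :
    (blk a b c d).adjoint = blk a.adjoint c.adjoint b.adjoint d.adjoint := by
  refine ((eq_adjoint_iff _ _).2 fun x y => ?_).symm
  simp only [blk_apply, WithLp.prod_inner_apply, WithLp.ofLp_fst, WithLp.ofLp_snd,
    inner_add_left, inner_add_right, adjoint_inner_left]
  ring

lemma blk_comp_blk (a : X →L[ℂ] X) (b : U →L[ℂ] X) (c : X →L[ℂ] Y) (d : U →L[ℂ] Y)
    (a' : X →L[ℂ] X) (b' : V →L[ℂ] X) (c' : X →L[ℂ] U) (d' : V →L[ℂ] U) :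
    (blk a b c d).comp (blk a' b' c' d') =
      blk (a.comp a' + b.comp c') (a.comp b' + b.comp d') (c.comp a' + d.comp c')
        (c.comp b' + d.comp d') := by
  ext x
  simp only [comp_apply, blk_apply, WithLp.toLp_fst, WithLp.toLp_snd, add_apply,
    map_add]
  exact congr_arg _ (Prod.ext (add_add_add_comm ..) (add_add_add_comm ..))

lemma blk_one_zero_zero_one : blk (1 : X →L[ℂ] X) 0 0 (1 : U →L[ℂ] U) = 1 := by
  ext x
  simp
  rfl

end BlockOperator

section Minimality

variable {R M N : Type*} [Semiring R]
  [TopologicalSpace M] [AddCommMonoid M] [Module R M]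
  [TopologicalSpace N] [AddCommMonoid N] [Module R N]

lemma topologicalClosure_span_iUnion_range_pow_comp_eq_top [ContinuousAdd M]
    [ContinuousConstSMul R M] (A : M →L[R] M) {B : N →L[R] M}
    (hB : Function.Surjective B) :
    (Submodule.span R (⋃ n : ℕ, Set.range ((A ^ n).comp B : N → M))).topologicalClosure = ⊤ := by
  refine eq_top_mono (Submodule.le_topologicalClosure _) (eq_top_iff.2 fun x _ => ?_)
  refine Submodule.subset_span (Set.mem_iUnion.2 ⟨0, ?_⟩)
  simpa using hB x

lemma iInf_ker_comp_pow_eq_bot (A : M →L[R] M) {C : M →L[R] N} (hC : Function.Injective C) :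
    ⨅ n : ℕ, LinearMap.ker ((C.comp (A ^ n) : M →L[R] N) : M →ₗ[R] N) = ⊥ := by
  refine eq_bot_mono (iInf_le _ 0) ?_
  rw [pow_zero, one_def, comp_id]
  exact LinearMap.ker_eq_bot_of_injective hC

end Minimality

namespace EuclideanSpace

variable {𝕜 ι : Type*} [RCLike 𝕜] [Fintype ι] [DecidableEq ι]

lemma adjoint_proj_apply (i : ι) (c : 𝕜) :
    (proj i : EuclideanSpace 𝕜 ι →L[𝕜] 𝕜).adjoint c = single i c := by
  refine ext_inner_right 𝕜 fun u => ?_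
  simp [adjoint_inner_left, inner_single_left, mul_comm]

lemma proj_comp_adjoint_proj (i : ι) :
    (proj i : EuclideanSpace 𝕜 ι →L[𝕜] 𝕜).comp (proj i).adjoint = 1 := by
  ext
  simp [adjoint_proj_apply]

end EuclideanSpace

/-- For the system `Σ = (A,B,C,D; ℂ, ℂ², ℂ)` with `A = 0`, `B = [1, 0]`,
`C = 1`, `D = [0, 0]`: the system matrix `M(Σ)` is a co-isometry, `Σ` is minimal, its transfer
function is `θ(λ) = [λ, 0]`, and `δ_Σ(1) = I − D*D − B*B = diag(0,1) ≠ 0`. -/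
theorem statement19 :
    let A : ℂ →L[ℂ] ℂ := 0
    let B : EuclideanSpace ℂ (Fin 2) →L[ℂ] ℂ := EuclideanSpace.proj (0 : Fin 2)
    let C : ℂ →L[ℂ] ℂ := 1
    let D : EuclideanSpace ℂ (Fin 2) →L[ℂ] ℂ := 0
    ((blk A B C D).comp (blk A B C D).adjoint = 1) ∧
      ((Submodule.span ℂ
          (⋃ n : ℕ, Set.range (((A ^ n).comp B : EuclideanSpace ℂ (Fin 2) →L[ℂ] ℂ) :
            EuclideanSpace ℂ (Fin 2) → ℂ))).topologicalClosure = ⊤) ∧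
      ((⨅ n : ℕ, LinearMap.ker ((C.comp (A ^ n) : ℂ →L[ℂ] ℂ) : ℂ →ₗ[ℂ] ℂ)) = ⊥) ∧
      (∀ (lam : ℂ) (u : EuclideanSpace ℂ (Fin 2)),
        (D + lam • (C.comp ((Ring.inverse (1 - lam • A)).comp B))) u = lam * u 0) ∧
      (∀ (u : EuclideanSpace ℂ (Fin 2)) (i : Fin 2),
        ((1 - D.adjoint.comp D - B.adjoint.comp B) u) i = if i = 0 then 0 else u i) ∧
      (1 - D.adjoint.comp D - B.adjoint.comp B ≠ 0) := by
  intro A B C D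
  have defect (u : EuclideanSpace ℂ (Fin 2)) (i : Fin 2) :
      ((1 - D.adjoint.comp D - B.adjoint.comp B) u) i = if i = 0 then 0 else u i := by
    fin_cases i <;> simp [B, D, EuclideanSpace.adjoint_proj_apply]
  have hB : Function.Surjective B := fun x => ⟨EuclideanSpace.single 0 x, by simp [B]⟩
  refine ⟨?_, topologicalClosure_span_iUnion_range_pow_comp_eq_top A hB,
    iInf_ker_comp_pow_eq_bot A Function.injective_id, fun lam u => ?_, defect, fun h => ?_⟩
  · rw [adjoint_blk, blk_comp_blk, ← blk_one_zero_zero_one]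
    simp [A, B, C, D, EuclideanSpace.proj_comp_adjoint_proj, adjoint_one, ← mul_def]
  · have resolvent : (1 : ℂ →L[ℂ] ℂ) - lam • A = 1 := by
      rw [show lam • A = 0 from smul_zero (A := ℂ →L[ℂ] ℂ) lam, sub_zero]
    simp [resolvent, B, C, D]
  · simpa [h] using defect (EuclideanSpace.single 1 1) 1
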